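/- arXiv:1301.7322 — 5 statements merged into one kernel-verified Lean document; each statement's English description precedes it below -/
import Mathlib

section
/- The system of equations λ - 1 + (4/3)λq = 0 and λ² - 2λ + (4/3)(λ² + 2)q = 0 in real unknowns λ, q has exactly two solutions: (λ, q) = (√3 - 1, (3/8)(√3 - 1)) and (λ, q) = (-√3 - 1, (3/8)(-√3 - 1)). -/
/-- The system λ - 1 + (4/3)λq = 0, λ² - 2λ + (4/3)(λ² + 2)q = 0 has exactly the two
solutions (√3 - 1, (3/8)(√3 - 1)) and (-√3 - 1, (3/8)(-√3 - 1)). -/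
theorem trisector_lambda_q_solutions (l q : ℝ) :
    (l - 1 + (4 / 3) * l * q = 0 ∧ l ^ 2 - 2 * l + (4 / 3) * (l ^ 2 + 2) * q = 0) ↔
      ((l, q) = (Real.sqrt 3 - 1, (3 / 8) * (Real.sqrt 3 - 1)) ∨
        (l, q) = (-Real.sqrt 3 - 1, (3 / 8) * (-Real.sqrt 3 - 1))) := by
  have hs : Real.sqrt 3 ^ 2 = 3 := Real.sq_sqrt (by norm_num)
  constructor
  · rintro ⟨h1, h2⟩
    -- eliminate q : l * h2 - (l^2+2) * h1 gives l^2 + 2*l - 2 = 0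
    have h3 : l ^ 2 + 2 * l - 2 = 0 := by
      linear_combination (l ^ 2 + 2) * h1 - l * h2
    have hl0 : l ≠ 0 := by
      intro h; rw [h] at h3; norm_num at h3
    -- q is determined
    have h1' : l - 1 + (4 / 3) * l * ((3 / 8) * l) = 0 := by linear_combination (1 / 2) * h3
    have h5 : (4 / 3) * l * (q - (3 / 8) * l) = 0 := by linear_combination h1 - h1'
    have hq : q = (3 / 8) * l := by
      rcases mul_eq_zero.mp h5 with h | h
      · rcases mul_eq_zero.mp h with h | h
        · norm_num at h
        · exact absurd h hl0
      · linarith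
    have hfac : (l - (Real.sqrt 3 - 1)) * (l - (-Real.sqrt 3 - 1)) = 0 := by
      linear_combination h3 - hs
    rcases mul_eq_zero.mp hfac with h | h
    · left
      rw [Prod.mk.injEq]
      have hl : l = Real.sqrt 3 - 1 := by linarith
      exact ⟨hl, by rw [hq, hl]⟩
    · right
      rw [Prod.mk.injEq]
      have hl : l = -Real.sqrt 3 - 1 := by linarith
      exact ⟨hl, by rw [hq, hl]⟩
  · rintro (h | h) <;> rw [Prod.mk.injEq] at h <;> obtain ⟨hl, hq⟩ := h <;> subst hl <;> subst hq
    · constructor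
      · linear_combination (1 / 2) * hs
      · linear_combination ((Real.sqrt 3 - 1) / 2) * hs
    · constructor
      · linear_combination (1 / 2) * hs
      · linear_combination ((-Real.sqrt 3 - 1) / 2) * hs
end

section
/- Let α : I → ℝ² be a smooth regular plane curve with coordinates α(t) = (a(t), b(t)), not passing through the point p = (0,1). Let n(t) denote the unit normal vector of α. Then the curve β(t) = p + 2⟨α(t) - p, n(t)⟩·n(t) satisfies, for every t, both F(β(t), t) = 0 and ∂F/∂t(β(t), t) = 0, where F((x,y), t) = (x - a(t))² + (y - b(t))² - (a(t)² + (b(t) - 1)²). That is, β is a parametrization of the envelope of the family of circles centered at α(t) with radius the distance from α(t) to p. -/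
/-- The curve β(t) = p + 2⟨α(t) - p, n(t)⟩ n(t), p = (0,1), satisfies F(β(t), t) = 0 and
∂F/∂t(β(t), t) = 0 for the family of circles F((x,y),t) = (x-a(t))² + (y-b(t))² - (a(t)² + (b(t)-1)²),
i.e. β parametrizes the envelope of the circles centered at α(t) of radius d(α(t), p). -/
theorem envelope_of_circles
    (a b : ℝ → ℝ) (ha : ContDiff ℝ (⊤ : ℕ∞) a) (hb : ContDiff ℝ (⊤ : ℕ∞) b)
    (hreg : ∀ t, (deriv a t, deriv b t) ≠ (0, 0))
    (havoid : ∀ t, (a t, b t) ≠ (0, 1))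
    (nrm n₁ n₂ d β₁ β₂ : ℝ → ℝ)
    (hnrm : ∀ t, nrm t = Real.sqrt ((deriv a t) ^ 2 + (deriv b t) ^ 2))
    (hn₁ : ∀ t, n₁ t = -(deriv b t) / nrm t)
    (hn₂ : ∀ t, n₂ t = deriv a t / nrm t)
    (hd : ∀ t, d t = a t * n₁ t + (b t - 1) * n₂ t)
    (hβ₁ : ∀ t, β₁ t = 0 + 2 * d t * n₁ t)
    (hβ₂ : ∀ t, β₂ t = 1 + 2 * d t * n₂ t)
    (F : ℝ → ℝ → ℝ → ℝ)
    (hF : ∀ x y t, F x y t = (x - a t) ^ 2 + (y - b t) ^ 2 - ((a t) ^ 2 + (b t - 1) ^ 2)) :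
    ∀ t, F (β₁ t) (β₂ t) t = 0 ∧ deriv (fun s => F (β₁ t) (β₂ t) s) t = 0 := by
  intro t
  have hpos : 0 < (deriv a t) ^ 2 + (deriv b t) ^ 2 := by
    have h := hreg t
    have h' : deriv a t ≠ 0 ∨ deriv b t ≠ 0 := by
      by_contra hc
      push_neg at hc
      exact h (by simp [hc.1, hc.2])
    rcases h' with h' | h' <;> positivity
  have hN0 : nrm t ≠ 0 := by
    rw [hnrm]
    exact (Real.sqrt_pos.mpr hpos).ne'
  have hN2 : nrm t ^ 2 = (deriv a t) ^ 2 + (deriv b t) ^ 2 := by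
    rw [hnrm]; exact Real.sq_sqrt hpos.le
  have hunit : n₁ t ^ 2 + n₂ t ^ 2 = 1 := by
    rw [hn₁, hn₂]
    field_simp
    linear_combination -hN2
  constructor
  · rw [hF, hβ₁ t, hβ₂ t]
    linear_combination 4 * (d t) ^ 2 * hunit + 4 * (d t) * (hd t)
  · have Ha : HasDerivAt a (deriv a t) t :=
      ((ha.differentiable (by simp)) t).hasDerivAt
    have Hb : HasDerivAt b (deriv b t) t :=
      ((hb.differentiable (by simp)) t).hasDerivAt
    have hkey : HasDerivAt (fun s => F (β₁ t) (β₂ t) s)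
        (2 * (β₁ t - a t) * (-(deriv a t)) + 2 * (β₂ t - b t) * (-(deriv b t))
          - (2 * (a t) * deriv a t + 2 * (b t - 1) * deriv b t)) t := by
      have hFs : (fun s => F (β₁ t) (β₂ t) s)
          = fun s => (β₁ t - a s) ^ 2 + (β₂ t - b s) ^ 2 - ((a s) ^ 2 + (b s - 1) ^ 2) :=
        funext fun s => hF _ _ s
      rw [hFs]
      have h1 := ((hasDerivAt_const t (β₁ t)).sub Ha).pow 2
      have h2 := ((hasDerivAt_const t (β₂ t)).sub Hb).pow 2
      have h3 := Ha.pow 2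
      have h4 := (Hb.sub_const 1).pow 2
      refine HasDerivAt.congr_deriv ((h1.add h2).sub (h3.add h4)) ?_
      simp only [Pi.sub_apply]
      ring
    rw [hkey.deriv, hβ₁ t, hβ₂ t, hd t, hn₁, hn₂]
    field_simp
    ring
end

section
/- Let α be a unit-speed smooth plane curve avoiding p = (0,1) with unit tangent t(s), unit normal n(s) and curvature κ(s), and let β(s) = p + 2⟨α(s) - p, n(s)⟩·n(s). Then β'(s) = -2κ(s)(⟨α(s) - p, t(s)⟩·n(s) + ⟨α(s) - p, n(s)⟩·t(s)), and consequently ‖β'(s)‖ = 2|κ(s)|·‖α(s) - p‖. -/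
/-- For a unit-speed curve α = (a,b) avoiding p = (0,1), with tangent t = (a',b'),
normal n = (-b',a'), curvature κ (so t' = κn, n' = -κt), and
β = p + 2⟨α - p, n⟩ n, one has β' = -2κ(⟨α - p, t⟩ n + ⟨α - p, n⟩ t) and
hence ‖β'‖ = 2|κ|‖α - p‖. -/
theorem envelope_derivative_formula
    (a b κ : ℝ → ℝ) (ha : ContDiff ℝ (⊤ : ℕ∞) a) (hb : ContDiff ℝ (⊤ : ℕ∞) b)
    (hunit : ∀ s, (deriv a s) ^ 2 + (deriv b s) ^ 2 = 1)
    (havoid : ∀ s, (a s, b s) ≠ (0, 1))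
    (hκ₁ : ∀ s, deriv (deriv a) s = κ s * (-(deriv b s)))
    (hκ₂ : ∀ s, deriv (deriv b) s = κ s * deriv a s)
    (n₁ n₂ d β₁ β₂ : ℝ → ℝ)
    (hn₁ : ∀ s, n₁ s = -(deriv b s))
    (hn₂ : ∀ s, n₂ s = deriv a s)
    (hd : ∀ s, d s = a s * n₁ s + (b s - 1) * n₂ s)
    (hβ₁ : ∀ s, β₁ s = 0 + 2 * d s * n₁ s)
    (hβ₂ : ∀ s, β₂ s = 1 + 2 * d s * n₂ s) :
    ∀ s,
      deriv β₁ s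
          = -2 * κ s * ((a s * deriv a s + (b s - 1) * deriv b s) * n₁ s + d s * deriv a s) ∧
      deriv β₂ s
          = -2 * κ s * ((a s * deriv a s + (b s - 1) * deriv b s) * n₂ s + d s * deriv b s) ∧
      Real.sqrt ((deriv β₁ s) ^ 2 + (deriv β₂ s) ^ 2)
          = 2 * |κ s| * Real.sqrt ((a s) ^ 2 + (b s - 1) ^ 2) := by
  have hda : Differentiable ℝ a := ha.differentiable (by simp)
  have hdb : Differentiable ℝ b := hb.differentiable (by simp)
  have hda' : Differentiable ℝ (deriv a) :=
    ((contDiff_infty_iff_deriv.mp (ha.of_le (by simp))).2).differentiable (by simp)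
  have hdb' : Differentiable ℝ (deriv b) :=
    ((contDiff_infty_iff_deriv.mp (hb.of_le (by simp))).2).differentiable (by simp)
  intro s
  have Ha : HasDerivAt a (deriv a s) s := (hda s).hasDerivAt
  have Hb : HasDerivAt b (deriv b s) s := (hdb s).hasDerivAt
  have Ha' : HasDerivAt (deriv a) (κ s * (-(deriv b s))) s := by
    have := (hda' s).hasDerivAt
    rwa [hκ₁ s] at this
  have Hb' : HasDerivAt (deriv b) (κ s * deriv a s) s := by
    have := (hdb' s).hasDerivAt
    rwa [hκ₂ s] at this
  have hf1 : β₁ = fun s => 0 + 2 * (a s * (-(deriv b s)) + (b s - 1) * deriv a s) * (-(deriv b s)) := by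
    funext u; rw [hβ₁ u, hd u, hn₁ u, hn₂ u]
  have hf2 : β₂ = fun s => 1 + 2 * (a s * (-(deriv b s)) + (b s - 1) * deriv a s) * deriv a s := by
    funext u; rw [hβ₂ u, hd u, hn₁ u, hn₂ u]
  have H1 : HasDerivAt (fun s => 0 + 2 * (a s * (-(deriv b s)) + (b s - 1) * deriv a s) * (-(deriv b s)))
      ((2 * (deriv a s * (-(deriv b s)) + a s * (-(κ s * deriv a s)) +
        (deriv b s * deriv a s + (b s - 1) * (κ s * (-(deriv b s)))))) * (-(deriv b s)) +
        2 * (a s * (-(deriv b s)) + (b s - 1) * deriv a s) * (-(κ s * deriv a s))) s := by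
    have hD : HasDerivAt (fun s => a s * (-(deriv b s)) + (b s - 1) * deriv a s)
        (deriv a s * (-(deriv b s)) + a s * (-(κ s * deriv a s)) +
          (deriv b s * deriv a s + (b s - 1) * (κ s * (-(deriv b s))))) s :=
      (Ha.mul Hb'.neg).add ((Hb.sub_const 1).mul Ha')
    exact ((hD.const_mul 2).mul Hb'.neg).const_add 0
  have H2 : HasDerivAt (fun s => 1 + 2 * (a s * (-(deriv b s)) + (b s - 1) * deriv a s) * deriv a s)
      ((2 * (deriv a s * (-(deriv b s)) + a s * (-(κ s * deriv a s)) +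
        (deriv b s * deriv a s + (b s - 1) * (κ s * (-(deriv b s)))))) * deriv a s +
        2 * (a s * (-(deriv b s)) + (b s - 1) * deriv a s) * (κ s * (-(deriv b s)))) s := by
    have hD : HasDerivAt (fun s => a s * (-(deriv b s)) + (b s - 1) * deriv a s)
        (deriv a s * (-(deriv b s)) + a s * (-(κ s * deriv a s)) +
          (deriv b s * deriv a s + (b s - 1) * (κ s * (-(deriv b s))))) s :=
      (Ha.mul Hb'.neg).add ((Hb.sub_const 1).mul Ha')
    exact ((hD.const_mul 2).mul Ha').const_add 1
  have e1 : deriv β₁ s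
      = -2 * κ s * ((a s * deriv a s + (b s - 1) * deriv b s) * n₁ s + d s * deriv a s) := by
    rw [hf1, H1.deriv, hn₁ s, hd s, hn₁ s, hn₂ s]; ring
  have e2 : deriv β₂ s
      = -2 * κ s * ((a s * deriv a s + (b s - 1) * deriv b s) * n₂ s + d s * deriv b s) := by
    rw [hf2, H2.deriv, hn₂ s, hd s, hn₁ s, hn₂ s]; ring
  refine ⟨e1, e2, ?_⟩
  have hsum : (deriv β₁ s) ^ 2 + (deriv β₂ s) ^ 2
      = (2 * |κ s|) ^ 2 * ((a s) ^ 2 + (b s - 1) ^ 2) := by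
    rw [e1, e2, hn₁ s, hn₂ s, hd s, hn₁ s, hn₂ s]
    have hu := hunit s
    have habs : |κ s| ^ 2 = κ s ^ 2 := sq_abs _
    linear_combination (4 * κ s ^ 2 * ((a s) ^ 2 + (b s - 1) ^ 2) *
        ((deriv a s) ^ 2 + (deriv b s) ^ 2 + 1)) * hu +
      (-4 * ((a s) ^ 2 + (b s - 1) ^ 2)) * habs
  rw [hsum, Real.sqrt_mul (sq_nonneg _), Real.sqrt_sq (by positivity)]
end

section
/- Let α be a unit-speed smooth plane curve avoiding p = (0,1), with unit tangent t(s) and unit normal n(s), and let β(s) = p + 2⟨α(s) - p, n(s)⟩·n(s). Writing u(s) = (α(s) - p)/‖α(s) - p‖, the unit tangent of β at s (when β'(s) ≠ 0) equals -⟨u(s), t(s)⟩·n(s) - ⟨u(s), n(s)⟩·t(s), up to sign. In particular the tangent direction of β at s depends only on α(s) and the tangent line of α at s. -/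
/-- For a unit-speed curve α = (a,b) avoiding p = (0,1), with u = (α - p)/‖α - p‖,
the unit tangent of β = p + 2⟨α - p, n⟩ n, where β'(s) ≠ 0, equals
-⟨u,t⟩ n - ⟨u,n⟩ t up to sign; in particular it depends only on α(s) and the
tangent line of α at s. -/
theorem envelope_unit_tangent
    (a b : ℝ → ℝ) (ha : ContDiff ℝ (⊤ : ℕ∞) a) (hb : ContDiff ℝ (⊤ : ℕ∞) b)
    (hunit : ∀ s, (deriv a s) ^ 2 + (deriv b s) ^ 2 = 1)
    (havoid : ∀ s, (a s, b s) ≠ (0, 1))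
    (n₁ n₂ d β₁ β₂ ρ u₁ u₂ : ℝ → ℝ)
    (hn₁ : ∀ s, n₁ s = -(deriv b s))
    (hn₂ : ∀ s, n₂ s = deriv a s)
    (hd : ∀ s, d s = a s * n₁ s + (b s - 1) * n₂ s)
    (hβ₁ : ∀ s, β₁ s = 0 + 2 * d s * n₁ s)
    (hβ₂ : ∀ s, β₂ s = 1 + 2 * d s * n₂ s)
    (hρ : ∀ s, ρ s = Real.sqrt ((a s) ^ 2 + (b s - 1) ^ 2))
    (hu₁ : ∀ s, u₁ s = a s / ρ s)
    (hu₂ : ∀ s, u₂ s = (b s - 1) / ρ s) :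
    ∀ s, (deriv β₁ s, deriv β₂ s) ≠ (0, 0) →
      ∀ N v₁ v₂ : ℝ,
        N = Real.sqrt ((deriv β₁ s) ^ 2 + (deriv β₂ s) ^ 2) →
        v₁ = -((u₁ s * deriv a s + u₂ s * deriv b s) * n₁ s
              + (u₁ s * n₁ s + u₂ s * n₂ s) * deriv a s) →
        v₂ = -((u₁ s * deriv a s + u₂ s * deriv b s) * n₂ s
              + (u₁ s * n₁ s + u₂ s * n₂ s) * deriv b s) →
        (deriv β₁ s / N, deriv β₂ s / N) = (v₁, v₂) ∨
          (deriv β₁ s / N, deriv β₂ s / N) = (-v₁, -v₂) := by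
  intro s hne N v₁ v₂ hN hv₁ hv₂
  have hinf : (((⊤:ℕ∞)) : WithTop ℕ∞) ≤ ⊤ := le_top
  have h1inf : (1 : WithTop ℕ∞) ≤ ((⊤:ℕ∞) : WithTop ℕ∞) := by exact_mod_cast le_top
  have hda : ContDiff ℝ ((⊤:ℕ∞) : WithTop ℕ∞) (deriv a) := (contDiff_infty_iff_deriv.mp (ha.of_le le_rfl)).2
  have hdb : ContDiff ℝ ((⊤:ℕ∞) : WithTop ℕ∞) (deriv b) := (contDiff_infty_iff_deriv.mp (hb.of_le le_rfl)).2
  have hA : HasDerivAt a (deriv a s) s := (ha.differentiable (by simp) s).hasDerivAt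
  have hB : HasDerivAt b (deriv b s) s := (hb.differentiable (by simp) s).hasDerivAt
  have hA2 : HasDerivAt (deriv a) (deriv (deriv a) s) s :=
    (hda.differentiable (by simp) s).hasDerivAt
  have hB2 : HasDerivAt (deriv b) (deriv (deriv b) s) s :=
    (hdb.differentiable (by simp) s).hasDerivAt
  set A := deriv a s with hAdef
  set B := deriv b s with hBdef
  set A2 := deriv (deriv a) s with hA2def
  set B2 := deriv (deriv b) s with hB2def
  set K := A * B2 - B * A2 with hK
  have h1 : A ^ 2 + B ^ 2 = 1 := hunit s
  have hdd : A * A2 + B * B2 = 0 := by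
    have hcon : (fun t => (deriv a t) ^ 2 + (deriv b t) ^ 2) = fun _ => (1 : ℝ) :=
      funext hunit
    have h' : HasDerivAt (fun t => (deriv a t) ^ 2 + (deriv b t) ^ 2)
        (((2 : ℕ) : ℝ) * A ^ (2 - 1) * A2 + ((2 : ℕ) : ℝ) * B ^ (2 - 1) * B2) s :=
      (hA2.pow 2).add (hB2.pow 2)
    have h0 : HasDerivAt (fun t => (deriv a t) ^ 2 + (deriv b t) ^ 2) 0 s := by
      rw [hcon]; exact hasDerivAt_const s 1
    have := h'.unique h0
    push_cast at this
    linear_combination this / 2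
  have hA2e : A2 = -(K * B) := by
    rw [hK]; linear_combination A * hdd - A2 * h1
  have hB2e : B2 = K * A := by
    rw [hK]; linear_combination B * hdd - B2 * h1
  -- positivity facts about ρ
  have hsum : 0 < a s ^ 2 + (b s - 1) ^ 2 := by
    have h2 : a s ≠ 0 ∨ b s ≠ 1 := by
      by_contra h
      push_neg at h
      exact havoid s (by rw [h.1, h.2])
    rcases h2 with h | h
    · positivity
    · have h' : b s - 1 ≠ 0 := sub_ne_zero.mpr h
      positivity
  have hρpos : 0 < ρ s := by rw [hρ s]; exact Real.sqrt_pos.mpr hsum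
  have hρsq : ρ s ^ 2 = a s ^ 2 + (b s - 1) ^ 2 := by
    rw [hρ s]; exact Real.sq_sqrt hsum.le
  -- derivative of β₁
  have hDder : HasDerivAt (fun t => a t * -(deriv b t) + (b t - 1) * deriv a t)
      ((A * -B + a s * -B2) + (B * A + (b s - 1) * A2)) s :=
    (hA.mul hB2.neg).add ((hB.sub_const 1).mul hA2)
  have hβ1fun : β₁ = fun t => 0 + 2 * (a t * -(deriv b t) + (b t - 1) * deriv a t)
      * -(deriv b t) := by
    funext t; rw [hβ₁ t, hd t, hn₁ t, hn₂ t]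
  have hβ2fun : β₂ = fun t => 1 + 2 * (a t * -(deriv b t) + (b t - 1) * deriv a t)
      * deriv a t := by
    funext t; rw [hβ₂ t, hd t, hn₁ t, hn₂ t]
  have hder1 : deriv β₁ s =
      (2 * ((A * -B + a s * -B2) + (B * A + (b s - 1) * A2))) * -B
        + (2 * (a s * -B + (b s - 1) * A)) * -B2 := by
    rw [hβ1fun]
    have h' : HasDerivAt (fun t => 0 + 2 * (a t * -(deriv b t) + (b t - 1) * deriv a t)
        * -(deriv b t))
        ((2 * ((A * -B + a s * -B2) + (B * A + (b s - 1) * A2))) * -B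
          + (2 * (a s * -B + (b s - 1) * A)) * -B2) s := by
      have := ((hDder.const_mul 2).mul hB2.neg).const_add 0
      simpa using this
    exact h'.deriv
  have hder2 : deriv β₂ s =
      (2 * ((A * -B + a s * -B2) + (B * A + (b s - 1) * A2))) * A
        + (2 * (a s * -B + (b s - 1) * A)) * A2 := by
    rw [hβ2fun]
    have h' : HasDerivAt (fun t => 1 + 2 * (a t * -(deriv b t) + (b t - 1) * deriv a t)
        * deriv a t)
        ((2 * ((A * -B + a s * -B2) + (B * A + (b s - 1) * A2))) * A
          + (2 * (a s * -B + (b s - 1) * A)) * A2) s := by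
      have := ((hDder.const_mul 2).mul hA2).const_add 1
      simpa using this
    exact h'.deriv
  -- v formulas
  have hv₁' : v₁ * ρ s = (b s - 1) * (B ^ 2 - A ^ 2) + 2 * a s * A * B := by
    rw [hv₁, hu₁, hu₂, hn₁, hn₂]
    field_simp
    ring
  have hv₂' : v₂ * ρ s = a s * (B ^ 2 - A ^ 2) - 2 * (b s - 1) * A * B := by
    rw [hv₂, hu₁, hu₂, hn₁, hn₂]
    field_simp
    ring
  have hd1 : deriv β₁ s = 2 * K * (ρ s * v₁) := by
    rw [hder1, hA2e, hB2e]
    have : ρ s * v₁ = v₁ * ρ s := by ring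
    rw [this, hv₁']
    ring
  have hd2 : deriv β₂ s = 2 * K * (ρ s * v₂) := by
    rw [hder2, hA2e, hB2e]
    have : ρ s * v₂ = v₂ * ρ s := by ring
    rw [this, hv₂']
    ring
  have hvnorm : v₁ ^ 2 + v₂ ^ 2 = 1 := by
    have key : (v₁ * ρ s) ^ 2 + (v₂ * ρ s) ^ 2
        = (a s ^ 2 + (b s - 1) ^ 2) * (A ^ 2 + B ^ 2) ^ 2 := by
      rw [hv₁', hv₂']; ring
    have hρ2 : ρ s ^ 2 ≠ 0 := by positivity
    have : (v₁ ^ 2 + v₂ ^ 2) * ρ s ^ 2 = 1 * ρ s ^ 2 := by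
      linear_combination key + (a s ^ 2 + (b s - 1) ^ 2) * (A ^ 2 + B ^ 2 + 1) * h1 - hρsq
    exact mul_right_cancel₀ hρ2 this
  have hKne : K ≠ 0 := by
    intro h
    apply hne
    rw [hd1, hd2, h]
    norm_num
  have hNval : N = 2 * |K| * ρ s := by
    have e : (deriv β₁ s) ^ 2 + (deriv β₂ s) ^ 2 = (2 * |K| * ρ s) ^ 2 := by
      have hsq := sq_abs K
      rw [hd1, hd2]
      linear_combination (4 * K ^ 2 * ρ s ^ 2) * hvnorm - (4 * ρ s ^ 2) * hsq
    rw [hN, e]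
    exact Real.sqrt_sq (by positivity)
  rcases lt_or_gt_of_ne hKne with hK0 | hK0
  · right
    rw [hd1, hd2, hNval, abs_of_neg hK0]
    have hK' : K ≠ 0 := hKne
    simp only [Prod.mk.injEq]
    constructor <;> field_simp
  · left
    rw [hd1, hd2, hNval, abs_of_pos hK0]
    simp only [Prod.mk.injEq]
    constructor <;> field_simp
end

section
/- Let f : ℝ → ℝ be a real analytic function that is even, and suppose the graph of f coincides with the zero set of an irreducible polynomial P ∈ ℝ[x, y]. If all Taylor coefficients of f at 0 lie in a subfield K of ℝ, and P is normalized so that some fixed nonzero coefficient equals 1, then all coefficients of P lie in K. -/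
open MvPolynomial

/-!
Pick a `K`-linear retraction `ρ` of `ℝ` onto `K` and let `Q` be `P` with `ρ` applied to every
coefficient. Each monomial `t ^ a * f t ^ b` has all its Taylor coefficients at `0` in `K`, so the
vanishing of the Taylor coefficients of `t ↦ P (t, f t)` is a system of `K`-linear equations in
the coefficients of `P`. The map `ρ` preserves these equations, so by analyticity `Q` vanishes on
the graph too. Hence the irreducible `P` divides `Q` (resultant and Gauss's lemma in `ℝ[x][y]`);
as the support of `Q` lies in that of `P`, `Q = c P`, and the normalization forces `c = 1`.
-/

theorem eq_zero_of_forall_iteratedDeriv_eq_zero {𝕜 E : Type*} [NontriviallyNormedField 𝕜]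
    [CharZero 𝕜] [PreconnectedSpace 𝕜] [NormedAddCommGroup E] [NormedSpace 𝕜 E] [CompleteSpace E]
    {u : 𝕜 → E} (hu : ∀ x, AnalyticAt 𝕜 u x) {z : 𝕜} (h : ∀ n, iteratedDeriv n u z = 0) :
    u = 0 := by
  rw [← AnalyticOnNhd.analyticOrderAt_eq_top_iff_eq_zero z hu, ENat.eq_top_iff_forall_ge]
  exact fun n => (natCast_le_analyticOrderAt_iff_iteratedDeriv_eq_zero (hu z)).mpr fun i _ => h i

section TaylorSubalgebra

variable {𝕜 : Type*} [RCLike 𝕜]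

def taylorSubalgebra (K : Subfield 𝕜) : Subalgebra K (𝕜 → 𝕜) where
  carrier := {u | (∀ x, AnalyticAt 𝕜 u x) ∧ ∀ n, iteratedDeriv n u 0 ∈ K}
  mul_mem' {u v} hu hv := by
    refine ⟨fun x => (hu.1 x).mul (hv.1 x), fun n => ?_⟩
    rw [iteratedDeriv_mul (hu.1 0).contDiffAt (hv.1 0).contDiffAt]
    exact sum_mem fun i _ => mul_mem (mul_mem (natCast_mem K _) (hu.2 i)) (hv.2 _)
  add_mem' {u v} hu hv := by
    refine ⟨fun x => (hu.1 x).add (hv.1 x), fun n => ?_⟩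
    rw [iteratedDeriv_add (hu.1 0).contDiffAt (hv.1 0).contDiffAt]
    exact add_mem (hu.2 n) (hv.2 n)
  algebraMap_mem' c := by
    refine ⟨fun _ => analyticAt_const, fun n => ?_⟩
    rw [Pi.algebraMap_def, iteratedDeriv_const]
    split_ifs
    exacts [c.2, zero_mem K]

variable {K : Subfield 𝕜}

theorem id_mem_taylorSubalgebra : (fun t => t) ∈ taylorSubalgebra K := by
  refine ⟨fun _ => analyticAt_id, fun n => ?_⟩
  rw [iteratedDeriv_fun_id_zero]
  split_ifs
  exacts [one_mem K, zero_mem K]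

theorem sum_map_mul_eq_zero_of_sum_mul_eq_zero {ι : Type*} (ρ : 𝕜 →ₗ[K] 𝕜) {s : Finset ι}
    {h : ι → 𝕜 → 𝕜} (hh : ∀ i ∈ s, h i ∈ taylorSubalgebra K) {c : ι → 𝕜}
    (hc : ∀ t, ∑ i ∈ s, c i * h i t = 0) (t : 𝕜) : ∑ i ∈ s, ρ (c i) * h i t = 0 := by
  have hderiv (a : ι → 𝕜) (n : ℕ) : iteratedDeriv n (fun t => ∑ i ∈ s, a i * h i t) 0
      = ∑ i ∈ s, a i * iteratedDeriv n (h i) 0 := by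
    rw [iteratedDeriv_fun_sum (f := fun i t => a i * h i t)
      fun i hi => (analyticAt_const.mul ((hh i hi).1 0)).contDiffAt]
    simp only [iteratedDeriv_const_mul_field]
  have hcoeff (n : ℕ) : ∑ i ∈ s, c i * iteratedDeriv n (h i) 0 = 0 := by
    rw [← hderiv, funext hc, iteratedDeriv_const, ite_self]
  refine congrFun (eq_zero_of_forall_iteratedDeriv_eq_zero (z := 0) (fun x =>
    Finset.analyticAt_fun_sum _ fun i hi => analyticAt_const.mul ((hh i hi).1 x)) fun n => ?_) t
  calc iteratedDeriv n (fun t => ∑ i ∈ s, ρ (c i) * h i t) 0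
      = ρ (∑ i ∈ s, c i * iteratedDeriv n (h i) 0) := by
        rw [hderiv, map_sum]
        refine Finset.sum_congr rfl fun i hi => ?_
        -- `ρ` commutes with multiplication by `iteratedDeriv n (h i) 0 ∈ K`
        simpa [Subfield.smul_def, mul_comm] using (ρ.map_smul ⟨_, (hh i hi).2 n⟩ (c i)).symm
    _ = 0 := by rw [hcoeff, map_zero]

end TaylorSubalgebra

namespace MvPolynomial

variable {σ R S : Type*} [CommSemiring R] [CommSemiring S]

noncomputable def mapCoeffs (ρ : R →+ S) (P : MvPolynomial σ R) : MvPolynomial σ S :=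
  ∑ μ ∈ P.support, monomial μ (ρ (P.coeff μ))

variable (ρ : R →+ S) (P : MvPolynomial σ R)

@[simp]
theorem coeff_mapCoeffs (m : σ →₀ ℕ) : (P.mapCoeffs ρ).coeff m = ρ (P.coeff m) := by
  classical
  simp only [mapCoeffs, coeff_sum, coeff_monomial, Finset.sum_ite_eq', mem_support_iff]
  split_ifs with h
  · rfl
  · rw [not_not.mp h, map_zero]

theorem support_mapCoeffs_subset : (P.mapCoeffs ρ).support ⊆ P.support := by
  intro m hm
  rw [mem_support_iff, coeff_mapCoeffs] at hm
  exact mem_support_iff.mpr fun h => hm (by rw [h, map_zero])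

theorem eval_mapCoeffs (x : σ → S) :
    eval x (P.mapCoeffs ρ) = ∑ μ ∈ P.support, ρ (P.coeff μ) * ∏ i ∈ μ.support, x i ^ μ i := by
  simp only [mapCoeffs, map_sum, eval_monomial, Finsupp.prod]

end MvPolynomial

theorem MvPolynomial.eval_mapCoeffs_eq_zero_of_eval_eq_zero {𝕜 σ : Type*} [RCLike 𝕜]
    {K : Subfield 𝕜} (ρ : 𝕜 →ₗ[K] 𝕜) {γ : 𝕜 → σ → 𝕜}
    (hγ : ∀ i, (fun t => γ t i) ∈ taylorSubalgebra K) {P : MvPolynomial σ 𝕜}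
    (hP : ∀ t, eval (γ t) P = 0) (t : 𝕜) : eval (γ t) (P.mapCoeffs ρ.toAddMonoidHom) = 0 := by
  have hmonomial (μ : σ →₀ ℕ) : (fun t => ∏ i ∈ μ.support, γ t i ^ μ i) ∈ taylorSubalgebra K := by
    convert prod_mem (t := μ.support) fun i _ => pow_mem (hγ i) (μ i)
    simp [Finset.prod_apply]
  rw [eval_mapCoeffs]
  exact sum_map_mul_eq_zero_of_sum_mul_eq_zero ρ (fun μ _ => hmonomial μ)
    (fun t => by rw [← eval_eq]; exact hP t) t

theorem MvPolynomial.eq_C_mul_of_dvd_of_support_subset {σ R : Type*} [CommRing R] [IsDomain R]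
    {P Q : MvPolynomial σ R} (h : P ∣ Q) (hs : Q.support ⊆ P.support) : ∃ c, Q = C c * P := by
  obtain ⟨W, rfl⟩ := h
  obtain rfl | hP := eq_or_ne P 0
  · exact ⟨0, by simp⟩
  obtain rfl | hW := eq_or_ne W 0
  · exact ⟨0, by simp⟩
  have hdeg := totalDegree_le_of_support_subset hs
  rw [totalDegree_mul_of_isDomain hP hW] at hdeg
  exact ⟨W.coeff 0, by rw [mul_comm, ← totalDegree_eq_zero_iff_eq_C.mp (by omega)]⟩

theorem Polynomial.dvd_of_forall_eval₂_eq_zero {R k ι : Type*} [CommRing R] [IsDomain R]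
    [NormalizedGCDMonoid R] [CommRing k] (φ : ι → R →+* k) (y : ι → k)
    (hφ : ∀ r, (∀ i, φ i r = 0) → r = 0) {p q : Polynomial R} (hp : Irreducible p)
    (hpy : ∀ i, p.eval₂ (φ i) (y i) = 0) (hqy : ∀ i, q.eval₂ (φ i) (y i) = 0) : p ∣ q := by
  have hdeg : p.natDegree ≠ 0 := by
    intro h0
    have hC := Polynomial.eq_C_of_natDegree_eq_zero h0
    have : p.coeff 0 = 0 := hφ _ fun i => by
      have := hpy i
      rwa [hC, Polynomial.eval₂_C] at this
    exact hp.ne_zero (by rw [hC, this, map_zero])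
  have hres : p.resultant q = 0 := by
    obtain ⟨a, b, -, -, hab⟩ :=
      Polynomial.exists_mul_add_mul_eq_C_resultant p q le_rfl le_rfl (.inl hdeg)
    refine hφ _ fun i => ?_
    simpa [hpy i, hqy i] using congr(Polynomial.eval₂ (φ i) (y i) $hab).symm
  let F := FractionRing R
  have hinj := IsFractionRing.injective R F
  have hprim := hp.isPrimitive hdeg
  have hpF : Irreducible (p.map (algebraMap R F)) :=
    hprim.irreducible_iff_irreducible_map_fraction_map.mp hp
  have hnc : ¬ IsCoprime (p.map (algebraMap R F)) (q.map (algebraMap R F)) := by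
    have := Polynomial.resultant_map_map p q p.natDegree q.natDegree (algebraMap R F)
    rw [hres, map_zero, ← Polynomial.natDegree_map_eq_of_injective hinj p,
      ← Polynomial.natDegree_map_eq_of_injective hinj q, Polynomial.resultant_eq_zero_iff] at this
    exact this.2
  exact hprim.dvd_of_fraction_map_dvd_fraction_map ((hpF.isCoprime_or_dvd _).resolve_left hnc)

theorem MvPolynomial.dvd_of_forall_eval_graph_eq_zero {k : Type*} [Field k] [Infinite k]
    (f : k → k) {P Q : MvPolynomial (Fin 2) k} (hP : Irreducible P)
    (hPf : ∀ t, eval ![t, f t] P = 0) (hQf : ∀ t, eval ![t, f t] Q = 0) : P ∣ Q := by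
  let := UniqueFactorizationMonoid.strongNormalizationMonoid (α := MvPolynomial (Fin 1) k)
  let := UniqueFactorizationMonoid.toNormalizedGCDMonoid (MvPolynomial (Fin 1) k)
  -- `e` reads a polynomial in `x, y` as a polynomial in `y` over `k[x]`
  let e : MvPolynomial (Fin 2) k ≃ₐ[k] Polynomial (MvPolynomial (Fin 1) k) :=
    (renameEquiv k (Equiv.swap 0 1)).trans (finSuccEquiv k 1)
  have he (t : k) (A : MvPolynomial (Fin 2) k) :
      (e A).eval₂ (eval ![t]) (f t) = eval ![t, f t] A := by
    refine RingHom.congr_fun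
      (?_ : (Polynomial.eval₂RingHom (eval ![t]) (f t)).comp e.toRingHom = _) A
    refine MvPolynomial.ringHom_ext (fun a => ?_) (fun i => ?_)
    · simp [e, finSuccEquiv_apply]
    · fin_cases i
      · simp [e, finSuccEquiv_apply]
        exact (Polynomial.eval₂_C (eval ![t]) (f t) (a := X 0)).trans (by simp)
      · simp [e, finSuccEquiv_apply]
  rw [← map_dvd_iff e]
  refine Polynomial.dvd_of_forall_eval₂_eq_zero (fun t => eval ![t]) f (fun r hr => ?_)
    ((MulEquiv.irreducible_iff e).mpr hP) (fun t => (he t P).trans (hPf t))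
    (fun t => (he t Q).trans (hQf t))
  refine MvPolynomial.funext fun x => ?_
  rw [show x = ![x 0] by ext i; fin_cases i; rfl, map_zero]
  exact hr (x 0)

theorem algebraic_graph_coefficients_in_subfield_general
    (f : ℝ → ℝ) (hf : ∀ x, AnalyticAt ℝ f x)
    (K : Subfield ℝ)
    (hTaylor : ∀ n : ℕ, iteratedDeriv n f 0 / (n.factorial : ℝ) ∈ K)
    (P : MvPolynomial (Fin 2) ℝ) (hirr : Irreducible P)
    (hgraph : {p : ℝ × ℝ | MvPolynomial.eval ![p.1, p.2] P = 0}
        = {p : ℝ × ℝ | p.2 = f p.1})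
    (m₀ : Fin 2 →₀ ℕ) (hnorm : MvPolynomial.coeff m₀ P = 1) :
    ∀ m : Fin 2 →₀ ℕ, MvPolynomial.coeff m P ∈ K := by
  obtain ⟨π, hπ⟩ := LinearMap.exists_leftInverse_of_injective (Algebra.linearMap K ℝ)
    (LinearMap.ker_eq_bot.mpr (algebraMap K ℝ).injective)
  set ρ : ℝ →ₗ[K] ℝ := Algebra.linearMap K ℝ ∘ₗ π
  have hρ (x : K) : ρ x = x := congrArg Subtype.val (LinearMap.congr_fun hπ x)
  have hfK : f ∈ taylorSubalgebra K :=
    ⟨hf, fun n => by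
      simpa [div_mul_cancel₀, n.factorial_ne_zero] using
        mul_mem (hTaylor n) (natCast_mem K n.factorial)⟩
  have hP (t : ℝ) : eval ![t, f t] P = 0 := (Set.ext_iff.mp hgraph (t, f t)).mpr rfl
  have hQ := eval_mapCoeffs_eq_zero_of_eval_eq_zero ρ (γ := fun t => ![t, f t])
    (Fin.forall_fin_two.mpr ⟨id_mem_taylorSubalgebra, hfK⟩) hP
  obtain ⟨c, hc⟩ := eq_C_mul_of_dvd_of_support_subset
    (dvd_of_forall_eval_graph_eq_zero f hirr hP hQ) (support_mapCoeffs_subset _ P)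
  have hρ1 : ρ 1 = 1 := by simpa using hρ 1
  have hc1 : c = 1 := by simpa [hnorm, hρ1] using congr(coeff m₀ $hc).symm
  intro m
  have hm : coeff m P = ρ (coeff m P) := by
    rw [← LinearMap.toAddMonoidHom_coe, ← coeff_mapCoeffs, hc, hc1, C_1, one_mul]
  exact hm ▸ (π _).2

/-- If the graph of an even real-analytic function f coincides with the zero set of an
irreducible polynomial P, all Taylor coefficients of f at 0 lie in a subfield K of ℝ,
and P is normalized so that some fixed nonzero coefficient equals 1, then all
coefficients of P lie in K. -/
theorem algebraic_graph_coefficients_in_subfield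
    (f : ℝ → ℝ) (hf : ∀ x, AnalyticAt ℝ f x) (heven : ∀ x, f (-x) = f x)
    (K : Subfield ℝ)
    (hTaylor : ∀ n : ℕ, iteratedDeriv n f 0 / (n.factorial : ℝ) ∈ K)
    (P : MvPolynomial (Fin 2) ℝ) (hirr : Irreducible P)
    (hgraph : {p : ℝ × ℝ | MvPolynomial.eval ![p.1, p.2] P = 0}
        = {p : ℝ × ℝ | p.2 = f p.1})
    (m₀ : Fin 2 →₀ ℕ) (hnorm : MvPolynomial.coeff m₀ P = 1) :
    ∀ m : Fin 2 →₀ ℕ, MvPolynomial.coeff m P ∈ K :=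
  algebraic_graph_coefficients_in_subfield_general f hf K hTaylor P hirr hgraph m₀ hnorm
end
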